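/- Let p and q be discrete probability distributions on a common support, mutually absolutely continuous, let d(x) = log(p(x)/q(x)), and let X_1, ..., X_N be i.i.d. with distribution p and Y_1, ..., Y_N be i.i.d. with distribution q, all mutually independent. Then P( Σ_{i=1}^N d(Y_i) − Σ_{i=1}^N d(X_i) ≥ 0 ) ≤ exp(−N I), where I = −2 log Σ_ℓ √(p(ℓ) q(ℓ)) is the Renyi divergence of order 1/2 between p and q. -/

import Mathlib

/-! Chernoff's bound with exponent `1/2`. By Markov's inequality the probability is at most
`E exp((∑ d(Y_i) − ∑ d(X_i)) / 2)`, which by independence factors as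
`(E_p e^{-d/2})^N (E_q e^{d/2})^N`. Both one-sample factors equal the Bhattacharyya coefficient
`B = ∑ √(p ℓ q ℓ)`, so the bound is `B^{2N} = exp(−N I)`. -/

open MeasureTheory Filter
open scoped ENNReal

namespace Chernoff12

noncomputable def d (p q : PMF ℕ) (x : ℕ) : ℝ :=
  Real.log ((p x).toReal / (q x).toReal)

/-- The joint law of `(X_1, …, X_N, Y_1, …, Y_N)` with the `X_i` i.i.d. `∼ p`, the
`Y_i` i.i.d. `∼ q`, and everything independent. -/
noncomputable def jointLaw (N : ℕ) (p q : PMF ℕ) :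
    Measure ((Fin N → ℕ) × (Fin N → ℕ)) :=
  (Measure.pi fun _ : Fin N => p.toMeasure).prod (Measure.pi fun _ : Fin N => q.toMeasure)

/-- The Renyi divergence of order 1/2 between two discrete distributions on ℕ. -/
noncomputable def renyi (p q : PMF ℕ) : ℝ :=
  -2 * Real.log (∑' ℓ : ℕ, Real.sqrt ((p ℓ).toReal * (q ℓ).toReal))

theorem exp_half_log_div_mul {a b : ℝ} (ha : 0 ≤ a) (hb : 0 ≤ b) (h : a = 0 → b = 0) :
    Real.exp (Real.log (a / b) / 2) * b = √(a * b) := by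
  rcases hb.eq_or_lt with rfl | hb
  · simp
  have hab : 0 < a / b := div_pos (ha.lt_of_ne fun ha0 => hb.ne' (h ha0.symm)) hb
  rw [Real.exp_half, Real.exp_log hab, show a * b = a / b * b ^ 2 by field_simp,
    Real.sqrt_mul hab.le, Real.sqrt_sq hb.le]

section Product

variable {α : Type*} [MeasurableSpace α] (μ : Measure α) [SigmaFinite μ]

theorem lintegral_pi_prod_eq_pow {g : α → ℝ≥0∞} (hg : Measurable g) (n : ℕ) :
    ∫⁻ x : Fin n → α, ∏ i, g (x i) ∂Measure.pi (fun _ => μ) = (∫⁻ a, g a ∂μ) ^ n := by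
  induction n with
  | zero => simp
  | succ n ih =>
    rw [← ((measurePreserving_piFinSuccAbove (fun _ : Fin (n + 1) => μ) 0).symm).lintegral_comp_emb
        (MeasurableEquiv.measurableEmbedding _)]
    simp_rw [MeasurableEquiv.piFinSuccAbove_symm_apply, Fin.insertNthEquiv, Equiv.coe_fn_mk,
      Fin.prod_univ_succ, Fin.insertNth_zero, Fin.cons_zero, Fin.cons_succ, cast_eq]
    rw [lintegral_prod_mul (g := fun x : Fin n → α => ∏ i, g (x i)) hg.aemeasurable
      (Finset.measurable_prod _ fun i _ => hg.comp (measurable_pi_apply i)).aemeasurable,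
      ih, pow_succ']

theorem lintegral_pi_ofReal_exp_sum {f : α → ℝ} (hf : Measurable f) (n : ℕ) :
    ∫⁻ x : Fin n → α, ENNReal.ofReal (Real.exp (∑ i, f (x i))) ∂Measure.pi (fun _ => μ) =
      (∫⁻ a, ENNReal.ofReal (Real.exp (f a)) ∂μ) ^ n := by
  simp_rw [Real.exp_sum, ENNReal.ofReal_prod_of_nonneg fun i _ => (Real.exp_pos _).le]
  exact lintegral_pi_prod_eq_pow μ (ENNReal.measurable_ofReal.comp (Real.measurable_exp.comp hf)) n

end Product

theorem measure_nonneg_le_lintegral_exp {Ω : Type*} [MeasurableSpace Ω] (μ : Measure Ω)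
    {f : Ω → ℝ} (hf : Measurable f) {t : ℝ} (ht : 0 ≤ t) :
    μ {ω | 0 ≤ f ω} ≤ ∫⁻ ω, ENNReal.ofReal (Real.exp (t * f ω)) ∂μ :=
  calc μ {ω | 0 ≤ f ω}
      ≤ μ {ω | 1 ≤ ENNReal.ofReal (Real.exp (t * f ω))} := measure_mono fun ω hω => by
        simpa using Real.one_le_exp (mul_nonneg ht hω)
    _ ≤ ∫⁻ ω, ENNReal.ofReal (Real.exp (t * f ω)) ∂μ := by
        simpa using mul_meas_ge_le_lintegral
          (ENNReal.measurable_ofReal.comp (Real.measurable_exp.comp (hf.const_mul t))) 1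

section Bhattacharyya

variable {α : Type*}

noncomputable def bhattacharyya (p q : PMF α) : ℝ≥0∞ :=
  ∑' a, ENNReal.ofReal √((p a).toReal * (q a).toReal)

theorem bhattacharyya_comm (p q : PMF α) : bhattacharyya p q = bhattacharyya q p := by
  simp only [bhattacharyya, mul_comm]

theorem bhattacharyya_le_one (p q : PMF α) : bhattacharyya p q ≤ 1 := by
  have amgm (a : α) : ENNReal.ofReal √((p a).toReal * (q a).toReal) ≤ (p a + q a) / 2 :=
    calc ENNReal.ofReal √((p a).toReal * (q a).toReal)
        ≤ ENNReal.ofReal (((p a).toReal + (q a).toReal) / 2) :=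
          ENNReal.ofReal_le_ofReal <| Real.sqrt_le_iff.2
            ⟨by positivity, by nlinarith [sq_nonneg ((p a).toReal - (q a).toReal)]⟩
      _ = (p a + q a) / 2 := by
          rw [ENNReal.ofReal_div_of_pos two_pos, ENNReal.ofReal_add ENNReal.toReal_nonneg
            ENNReal.toReal_nonneg, ENNReal.ofReal_toReal (p.apply_ne_top a),
            ENNReal.ofReal_toReal (q.apply_ne_top a), ENNReal.ofReal_ofNat]
  calc bhattacharyya p q ≤ ∑' a, (p a + q a) / 2 := ENNReal.tsum_le_tsum amgm
    _ = 1 := by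
      simp_rw [div_eq_mul_inv]
      rw [ENNReal.tsum_mul_right, ENNReal.tsum_add, p.tsum_coe, q.tsum_coe, one_add_one_eq_two,
        ENNReal.mul_inv_cancel two_ne_zero ENNReal.ofNat_ne_top]

theorem bhattacharyya_ne_top (p q : PMF α) : bhattacharyya p q ≠ ∞ :=
  ((bhattacharyya_le_one p q).trans_lt ENNReal.one_lt_top).ne

theorem bhattacharyya_pos {p q : PMF α} (h : ∀ a, q a = 0 → p a = 0) :
    0 < bhattacharyya p q := by
  obtain ⟨a, ha⟩ := p.support_nonempty
  have hp : 0 < (p a).toReal := ENNReal.toReal_pos ha (p.apply_ne_top a)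
  have hq : 0 < (q a).toReal := ENNReal.toReal_pos (fun h0 => ha (h a h0)) (q.apply_ne_top a)
  exact (ENNReal.ofReal_pos.2 (Real.sqrt_pos.2 (mul_pos hp hq))).trans_le (ENNReal.le_tsum a)

theorem toReal_bhattacharyya (p q : PMF α) :
    (bhattacharyya p q).toReal = ∑' a, √((p a).toReal * (q a).toReal) := by
  rw [bhattacharyya, ENNReal.tsum_toReal_eq fun _ => ENNReal.ofReal_ne_top]
  exact tsum_congr fun a => ENNReal.toReal_ofReal (Real.sqrt_nonneg _)

theorem lintegral_exp_half_log_div [MeasurableSpace α] [MeasurableSingletonClass α] [Countable α]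
    (p q : PMF α) (h : ∀ a, p a = 0 → q a = 0) :
    ∫⁻ a, ENNReal.ofReal (Real.exp (Real.log ((p a).toReal / (q a).toReal) / 2)) ∂q.toMeasure =
      bhattacharyya p q := by
  rw [lintegral_countable']
  refine tsum_congr fun a => ?_
  have h' : (p a).toReal = 0 → (q a).toReal = 0 := by
    simpa [ENNReal.toReal_eq_zero_iff, p.apply_ne_top, q.apply_ne_top] using h a
  rw [q.toMeasure_apply_singleton a (measurableSet_singleton a),
    ← exp_half_log_div_mul ENNReal.toReal_nonneg ENNReal.toReal_nonneg h',
    ENNReal.ofReal_mul (Real.exp_pos _).le, ENNReal.ofReal_toReal (q.apply_ne_top a), mul_comm]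

end Bhattacharyya

theorem d_swap (p q : PMF ℕ) (x : ℕ) : d q p x = -d p q x := by
  rw [d, d, ← inv_div, Real.log_inv]

theorem renyi_eq_neg_two_mul_log_bhattacharyya (p q : PMF ℕ) :
    renyi p q = -2 * Real.log (bhattacharyya p q).toReal := by
  rw [renyi, toReal_bhattacharyya]

theorem exp_neg_mul_renyi (N : ℕ) {p q : PMF ℕ} (h : ∀ ℓ, q ℓ = 0 → p ℓ = 0) :
    Real.exp (-(N : ℝ) * renyi p q) = (bhattacharyya p q).toReal ^ (2 * N) := by
  rw [renyi_eq_neg_two_mul_log_bhattacharyya,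
    show -(N : ℝ) * (-2 * Real.log (bhattacharyya p q).toReal) =
      ((2 * N : ℕ) : ℝ) * Real.log (bhattacharyya p q).toReal by push_cast; ring,
    Real.exp_nat_mul, Real.exp_log (ENNReal.toReal_pos (bhattacharyya_pos h).ne'
      (bhattacharyya_ne_top p q))]

theorem lintegral_exp_half_d {p q : PMF ℕ} (h : ∀ ℓ, p ℓ = 0 → q ℓ = 0) :
    ∫⁻ x, ENNReal.ofReal (Real.exp (d p q x / 2)) ∂q.toMeasure = bhattacharyya p q :=
  lintegral_exp_half_log_div p q h

theorem lintegral_exp_half_llr_jointLaw (N : ℕ) {p q : PMF ℕ} (hac : ∀ ℓ, p ℓ = 0 ↔ q ℓ = 0) :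
    ∫⁻ ω, ENNReal.ofReal (Real.exp
        (2⁻¹ * ((∑ i, d p q (ω.2 i)) - ∑ i, d p q (ω.1 i)))) ∂jointLaw N p q =
      bhattacharyya p q ^ N * bhattacharyya p q ^ N :=
  calc _ = (∫⁻ x : Fin N → ℕ, ENNReal.ofReal (Real.exp (∑ i, d q p (x i) / 2))
          ∂Measure.pi (fun _ => p.toMeasure)) *
        ∫⁻ y : Fin N → ℕ, ENNReal.ofReal (Real.exp (∑ i, d p q (y i) / 2))
          ∂Measure.pi (fun _ => q.toMeasure) := by
        rw [jointLaw, ← lintegral_prod_mul Measurable.of_discrete.aemeasurable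
          Measurable.of_discrete.aemeasurable]
        refine lintegral_congr fun ω => ?_
        rw [← ENNReal.ofReal_mul (Real.exp_pos _).le, ← Real.exp_add]
        simp only [d_swap p q, ← Finset.sum_div, Finset.sum_neg_distrib]
        ring_nf
    _ = _ := by
        rw [lintegral_pi_ofReal_exp_sum _ (f := fun x => d q p x / 2) .of_discrete,
          lintegral_pi_ofReal_exp_sum _ (f := fun x => d p q x / 2) .of_discrete,
          lintegral_exp_half_d fun ℓ => (hac ℓ).2, lintegral_exp_half_d fun ℓ => (hac ℓ).1,
          bhattacharyya_comm]

theorem statement12 (N : ℕ) (p q : PMF ℕ) (hac : ∀ ℓ, p ℓ = 0 ↔ q ℓ = 0) :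
    (jointLaw N p q
        {ω | 0 ≤ (∑ i, d p q (ω.2 i)) - ∑ i, d p q (ω.1 i)}).toReal ≤
      Real.exp (-(N : ℝ) * renyi p q) := by
  have hB : bhattacharyya p q ^ N * bhattacharyya p q ^ N ≠ ∞ :=
    ENNReal.mul_ne_top (ENNReal.pow_ne_top (bhattacharyya_ne_top p q))
      (ENNReal.pow_ne_top (bhattacharyya_ne_top p q))
  have markov := measure_nonneg_le_lintegral_exp (jointLaw N p q) .of_discrete
    (f := fun ω => (∑ i, d p q (ω.2 i)) - ∑ i, d p q (ω.1 i)) (t := 2⁻¹) (by norm_num)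
  rw [lintegral_exp_half_llr_jointLaw N hac] at markov
  calc _ ≤ (bhattacharyya p q ^ N * bhattacharyya p q ^ N).toReal := ENNReal.toReal_mono hB markov
    _ = Real.exp (-(N : ℝ) * renyi p q) := by
        rw [exp_neg_mul_renyi N fun ℓ => (hac ℓ).2, ← pow_add, ENNReal.toReal_pow, two_mul]

end Chernoff12
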